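/- Let q be a partition of n with transpose q^t = [c_1 ≥ c_2 ≥ ... ≥ c_m], and let r ∈ (−1/2, 1/2]. For every injective tuple (x_1, ..., x_m) of real numbers with x_j − r ∈ ℤ for all j, one has Σ_{j=1}^m c_j x_j² ≥ Σ_{j=1}^m c_j y_j(r)², where y_j(r) = r + (−1)^{j−1} σ ⌊j/2⌋ with σ = 1 if r ≥ 0 and σ = −1 if r < 0. Moreover, if r ∉ {0, 1/2}, then equality holds if and only if the multiset in which x_j occurs with multiplicity c_j (for 1 ≤ j ≤ m) equals the multiset in which y_j(r) occurs with multiplicity c_j. -/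

import Mathlib

/-!
Since `c_j = #{p ∈ q : j ≤ p}`, the weighted sum `∑ c_j x_j²` splits along the rows of `q` as
`∑_{p ∈ q} ∑_{j ≤ p} x_j²`, and likewise the multiset `∑ c_j {x_j}` as `∑_{p ∈ q} {x_1, …, x_p}`.
The sequence `y_1, y_2, …` enumerates `r + ℤ` with `y_j²` non-decreasing (this needs `|r| ≤ 1/2`),
so `p` distinct points of `r + ℤ` have sum of squares at least `y_1² + ⋯ + y_p²`, by induction on
`p`: one of the points is not among `y_1, …, y_{p-1}`, hence its square is at least `y_p²`.
If `2r ∉ ℤ`, squaring is injective on `r + ℤ`, so equality forces `{x_1, …, x_p} = {y_1, …, y_p}`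
for every row `p`.
-/

/-- A partition of `N`: a non-increasing list of positive naturals summing to `N`. -/
def IsPartition (N : ℕ) (l : List ℕ) : Prop :=
  l.Pairwise (· ≥ ·) ∧ (∀ p ∈ l, 0 < p) ∧ l.sum = N

/-- The height `h_d(s) = #{j : d_j ≥ s}` (the `s`-th part of the transpose partition). -/
def height (l : List ℕ) (s : ℕ) : ℕ :=
  (l.filter (fun p => decide (s ≤ p))).length

/-- `σ(r) = 1` if `r ≥ 0` and `σ(r) = −1` if `r < 0`. -/
noncomputable def sgnR (r : ℝ) : ℝ := if 0 ≤ r then 1 else -1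

/-- `y_j(r) = r + (−1)^(j−1) · σ · ⌊j/2⌋`, where `σ = 1` if `r ≥ 0` and `σ = −1` if `r < 0`. -/
noncomputable def yval (r : ℝ) (j : ℕ) : ℝ :=
  r + (-1 : ℝ) ^ (j - 1) * sgnR r * ((j / 2 : ℕ) : ℝ)

open Finset

section FirstTerms

variable {α M : Type*} [DecidableEq α] [PartialOrder M] {y : ℕ → α} {g : α → M} {S : Finset α}

lemma exists_mem_apply_succ_le (hg : Monotone (g ∘ y)) (hS : ↑S ⊆ y '' Set.Ici 1) {k : ℕ}
    (hk : k < #S) : ∃ v ∈ S, g (y (k + 1)) ≤ g v := by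
  obtain ⟨v, hvS, hv⟩ := exists_mem_notMem_of_card_lt_card
    (s := (Icc 1 k).image y) (card_image_le.trans_lt (by simpa using hk))
  obtain ⟨j, hj, rfl⟩ := hS hvS
  refine ⟨y j, hvS, hg ?_⟩
  by_contra! hjk
  exact hv (mem_image_of_mem y (mem_Icc.2 ⟨hj, by omega⟩))

variable [AddCommMonoid M] [IsOrderedCancelAddMonoid M]

theorem sum_Icc_card_le_sum (hg : Monotone (g ∘ y)) (hS : ↑S ⊆ y '' Set.Ici 1) :
    ∑ j ∈ Icc 1 #S, g (y j) ≤ ∑ v ∈ S, g v := by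
  induction hk : #S generalizing S with
  | zero => simp_all
  | succ k ih =>
    obtain ⟨v, hv, hle⟩ := exists_mem_apply_succ_le hg hS (k := k) (by omega)
    have herase :=
      ih ((coe_subset.2 (erase_subset v S)).trans hS) (by rw [card_erase_of_mem hv, hk]; rfl)
    rw [sum_Icc_succ_top (by omega), ← sum_erase_add S g hv]
    exact add_le_add herase hle

theorem eq_image_Icc_card_of_sum_eq (hg : Monotone (g ∘ y)) (hinj : Set.InjOn g (y '' Set.Ici 1))
    (hS : ↑S ⊆ y '' Set.Ici 1) (h : ∑ v ∈ S, g v = ∑ j ∈ Icc 1 #S, g (y j)) :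
    S = (Icc 1 #S).image y := by
  induction hk : #S generalizing S with
  | zero => simp_all
  | succ k ih =>
    obtain ⟨v, hv, hle⟩ := exists_mem_apply_succ_le hg hS (k := k) (by omega)
    have hS' : ↑(S.erase v) ⊆ y '' Set.Ici 1 := (coe_subset.2 (erase_subset v S)).trans hS
    have hk' : #(S.erase v) = k := by rw [card_erase_of_mem hv, hk]; rfl
    rw [hk, sum_Icc_succ_top (by omega), ← sum_erase_add S g hv] at h
    have herase := sum_Icc_card_le_sum hg hS'
    rw [hk'] at herase
    obtain ⟨hsum, hval⟩ := (add_eq_add_iff_eq_and_eq herase hle).1 h.symm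
    have hvy : v = y (k + 1) :=
      hinj (hS hv) ⟨k + 1, Set.mem_Ici.2 (by omega), rfl⟩ hval.symm
    rw [← insert_erase hv, ih hS' (hk' ▸ hsum.symm) hk', hvy, ← image_insert,
      insert_Icc_right_eq_Icc_add_one (by omega)]

end FirstTerms

lemma height_cons (p : ℕ) (L : List ℕ) (j : ℕ) :
    height (p :: L) j = (if j ≤ p then 1 else 0) + height L j := by
  by_cases h : j ≤ p <;> simp [height, h, add_comm]

theorem sum_height_smul {M : Type*} [AddCommMonoid M] {L : List ℕ} {m : ℕ}
    (hL : ∀ p ∈ L, p ≤ m) (a : ℕ → M) :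
    ∑ j ∈ Icc 1 m, height L j • a j = (L.map fun p => ∑ j ∈ Icc 1 p, a j).sum := by
  induction L with
  | nil => simp [height]
  | cons p L ih =>
    rw [List.map_cons, List.sum_cons, ← ih fun p' hp' => hL p' (List.mem_cons_of_mem p hp')]
    simp_rw [height_cons, add_smul, sum_add_distrib, ite_smul, one_smul, zero_smul, ← sum_filter]
    congr 2
    ext j
    have := hL p List.mem_cons_self
    simp only [mem_filter, mem_Icc]
    omega

theorem sum_replicate_height {β : Type*} {L : List ℕ} {m : ℕ} (hL : ∀ p ∈ L, p ≤ m)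
    (a : ℕ → β) :
    ∑ j ∈ Icc 1 m, Multiset.replicate (height L j) (a j) =
      (L.map fun p => (Icc 1 p).val.map a).sum := by
  simp_rw [← Multiset.nsmul_singleton, sum_height_smul hL]
  congr 1
  refine List.map_congr_left fun p _ => ?_
  rw [← Multiset.sum_map_singleton ((Icc 1 p).val.map a), Multiset.map_map]
  rfl

theorem Multiset.sum_map_sum_replicate {ι β M : Type*} [AddCommMonoid M] (s : Finset ι)
    (c : ι → ℕ) (a : ι → β) (f : β → M) :
    ((∑ i ∈ s, replicate (c i) (a i)).map f).sum = ∑ i ∈ s, c i • f (a i) := by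
  have h := map_sum (sumAddMonoidHom.comp (mapAddMonoidHom f)) (fun i => replicate (c i) (a i)) s
  simp only [AddMonoidHom.coe_comp, Function.comp_apply, coe_mapAddMonoidHom,
    coe_sumAddMonoidHom] at h
  rw [h]
  simp [map_replicate, sum_replicate]

lemma List.le_headD_of_pairwise_ge {l : List ℕ} (hl : l.Pairwise (· ≥ ·)) {p : ℕ} (hp : p ∈ l) :
    p ≤ l.headD 0 := by
  cases l with
  | nil => simp at hp
  | cons a l =>
    rcases List.mem_cons.1 hp with rfl | hp
    · exact le_rfl
    · exact List.rel_of_pairwise_cons hl hp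

theorem List.sum_map_eq_sum_map_iff_of_le {ι M : Type*} [AddCommMonoid M] [PartialOrder M]
    [IsOrderedCancelAddMonoid M] {l : List ι} {f g : ι → M} (hle : ∀ i ∈ l, f i ≤ g i) :
    (l.map f).sum = (l.map g).sum ↔ ∀ i ∈ l, f i = g i := by
  refine ⟨fun h => ?_, fun h => congrArg List.sum (List.map_congr_left h)⟩
  by_contra! ⟨i, hi, hne⟩
  exact (List.sum_lt_sum f g hle ⟨i, hi, lt_of_le_of_ne (hle i hi) hne⟩).ne h

theorem List.sum_map_range_succ {M : Type*} [AddCommMonoid M] (m : ℕ) (f : ℕ → M) :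
    ((List.range m).map fun j => f (j + 1)).sum = ∑ j ∈ Icc 1 m, f j := by
  change ∑ j ∈ Finset.range m, f (j + 1) = _
  rw [range_eq_Ico, sum_Ico_add']
  rfl

section Yval

lemma sgnR_sq (r : ℝ) : sgnR r ^ 2 = 1 := by
  unfold sgnR; split_ifs <;> norm_num

lemma sgnR_mul_self (r : ℝ) : sgnR r * r = |r| := by
  unfold sgnR
  split_ifs with h
  · rw [one_mul, abs_of_nonneg h]
  · rw [abs_of_neg (not_le.1 h)]; ring

lemma yval_two_mul (r : ℝ) (k : ℕ) : yval r (2 * k) = r - sgnR r * k := by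
  rcases k with _ | k
  · simp [yval]
  · rw [yval, show 2 * (k + 1) - 1 = 2 * k + 1 by omega, show 2 * (k + 1) / 2 = k + 1 by omega,
      pow_succ, pow_mul]
    push_cast
    ring

lemma yval_two_mul_add_one (r : ℝ) (k : ℕ) : yval r (2 * k + 1) = r + sgnR r * k := by
  rw [yval, show 2 * k + 1 - 1 = 2 * k by omega, show (2 * k + 1) / 2 = k by omega, pow_mul]
  norm_num

variable {r : ℝ}

theorem monotone_yval_sq (hr : |r| ≤ 1 / 2) : Monotone fun j => yval r j ^ 2 := by
  have hs := sgnR_sq r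
  have habs := sgnR_mul_self r
  refine monotone_nat_of_le_succ fun j => ?_
  obtain ⟨k, rfl | rfl⟩ := Nat.even_or_odd' j
  · rw [yval_two_mul, yval_two_mul_add_one]
    nlinarith [mul_nonneg (abs_nonneg r) k.cast_nonneg]
  · rw [show 2 * k + 1 + 1 = 2 * (k + 1) by ring, yval_two_mul, yval_two_mul_add_one]
    push_cast
    nlinarith [mul_nonneg (by linarith : (0 : ℝ) ≤ 1 - 2 * |r|)
      (by positivity : (0 : ℝ) ≤ 2 * k + 1)]

lemma yval_sub_self_eq_intCast (r : ℝ) (j : ℕ) : ∃ t : ℤ, yval r j - r = t :=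
  ⟨(-1) ^ (j - 1) * (if 0 ≤ r then 1 else -1) * (j / 2 : ℕ), by
    unfold yval sgnR
    split_ifs <;> simp only [Int.cast_mul, Int.cast_pow, Int.cast_neg, Int.cast_one,
      Int.cast_natCast] <;> ring⟩

lemma mem_image_yval_of_sub_eq_intCast {v : ℝ} {t : ℤ} (h : v - r = t) :
    v ∈ yval r '' Set.Ici 1 := by
  have key : ∀ u : ℤ, ∃ j, 1 ≤ j ∧ yval r j = r + sgnR r * u := by
    rintro (k | k)
    · exact ⟨2 * k + 1, by omega, by rw [yval_two_mul_add_one]; simp⟩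
    · exact ⟨2 * (k + 1), by omega, by rw [yval_two_mul, Int.cast_negSucc]; ring⟩
  rw [sub_eq_iff_eq_add'] at h
  subst h
  rcases le_or_gt 0 r with hr | hr
  · simpa [sgnR, hr] using key t
  · simpa [sgnR, hr.not_ge] using key (-t)

lemma two_mul_ne_intCast (hr1 : -(1 / 2 : ℝ) < r) (hr2 : r ≤ 1 / 2) (hr0 : r ≠ 0)
    (hrh : r ≠ 1 / 2) (n : ℤ) : 2 * r ≠ n := by
  intro h
  have h1 : (-1 : ℝ) < n := by linarith
  have h2 : (n : ℝ) ≤ 1 := by linarith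
  obtain rfl | rfl : n = 0 ∨ n = 1 := by
    have : -1 < n := by exact_mod_cast h1
    have : n ≤ 1 := by exact_mod_cast h2
    omega
  · exact hr0 (by simpa using h)
  · exact hrh (by push_cast at h; linarith)

theorem sq_injOn_image_yval (h2r : ∀ n : ℤ, 2 * r ≠ n) :
    Set.InjOn (· ^ 2) (yval r '' Set.Ici 1) := by
  rintro _ ⟨i, -, rfl⟩ _ ⟨j, -, rfl⟩ h
  obtain ⟨s, hs⟩ := yval_sub_self_eq_intCast r i
  obtain ⟨t, ht⟩ := yval_sub_self_eq_intCast r j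
  rcases sq_eq_sq_iff_eq_or_eq_neg.1 h with h | h
  · exact h
  · exact absurd (by push_cast; linarith) (h2r (-(s + t)))

end Yval

section Rows

variable {r : ℝ} {x : ℕ → ℝ} {p : ℕ}

lemma image_subset_image_yval (hxr : ∀ j ∈ Icc 1 p, ∃ t : ℤ, x j - r = t) :
    ↑((Icc 1 p).image x) ⊆ yval r '' Set.Ici 1 := by
  intro v hv
  obtain ⟨j, hj, rfl⟩ := mem_image.1 hv
  obtain ⟨t, ht⟩ := hxr j hj
  exact mem_image_yval_of_sub_eq_intCast ht

lemma card_image_Icc (hx : Set.InjOn x (Icc 1 p)) : #((Icc 1 p).image x) = p := by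
  rw [card_image_of_injOn hx, Nat.card_Icc, Nat.add_sub_cancel]

theorem sum_yval_sq_le (hr : |r| ≤ 1 / 2) (hx : Set.InjOn x (Icc 1 p))
    (hxr : ∀ j ∈ Icc 1 p, ∃ t : ℤ, x j - r = t) :
    ∑ j ∈ Icc 1 p, yval r j ^ 2 ≤ ∑ j ∈ Icc 1 p, x j ^ 2 := by
  have h := sum_Icc_card_le_sum (g := (· ^ 2)) (monotone_yval_sq hr) (image_subset_image_yval hxr)
  rwa [card_image_Icc hx, sum_image hx] at h

theorem map_eq_map_yval_of_sum_sq_eq (hr : |r| ≤ 1 / 2) (h2r : ∀ n : ℤ, 2 * r ≠ n)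
    (hx : Set.InjOn x (Icc 1 p)) (hxr : ∀ j ∈ Icc 1 p, ∃ t : ℤ, x j - r = t)
    (h : ∑ j ∈ Icc 1 p, x j ^ 2 = ∑ j ∈ Icc 1 p, yval r j ^ 2) :
    (Icc 1 p).val.map x = (Icc 1 p).val.map (yval r) := by
  have himage := eq_image_Icc_card_of_sum_eq (g := (· ^ 2)) (monotone_yval_sq hr)
    (sq_injOn_image_yval h2r) (image_subset_image_yval hxr)
    (by rwa [card_image_Icc hx, sum_image hx])
  rw [card_image_Icc hx] at himage
  have hy : Set.InjOn (yval r) (Icc 1 p) :=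
    card_image_iff.1 (by rw [← himage, card_image_Icc hx, Nat.card_Icc, Nat.add_sub_cancel])
  rw [← image_val_of_injOn hx, himage, image_val_of_injOn hy]

end Rows

/-- Lemma 3.7 (gl_min): with `m` the number of parts of `qᵗ` and `c_j = h_q(j)`, for every
injective tuple `(x_1, …, x_m)` with `x_j − r ∈ ℤ`, one has
`∑ c_j x_j² ≥ ∑ c_j y_j(r)²`; when `r ∉ {0, 1/2}`, equality holds iff the multiset in which
`x_j` occurs with multiplicity `c_j` equals the one in which `y_j(r)` does. -/
theorem xi_norm_min (n : ℕ) (q : List ℕ) (hq : IsPartition n q)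
    (r : ℝ) (hr1 : -(1 / 2 : ℝ) < r) (hr2 : r ≤ 1 / 2)
    (x : ℕ → ℝ)
    (hinj : ∀ i j, 1 ≤ i → i ≤ q.headD 0 → 1 ≤ j → j ≤ q.headD 0 → x i = x j → i = j)
    (hint : ∀ j, 1 ≤ j → j ≤ q.headD 0 → ∃ t : ℤ, x j - r = (t : ℝ)) :
    (∑ j ∈ Finset.Icc 1 (q.headD 0), (height q j : ℝ) * (yval r j) ^ 2
        ≤ ∑ j ∈ Finset.Icc 1 (q.headD 0), (height q j : ℝ) * (x j) ^ 2) ∧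
    (r ≠ 0 → r ≠ 1 / 2 →
      ((∑ j ∈ Finset.Icc 1 (q.headD 0), (height q j : ℝ) * (x j) ^ 2
          = ∑ j ∈ Finset.Icc 1 (q.headD 0), (height q j : ℝ) * (yval r j) ^ 2) ↔
        ((List.range (q.headD 0)).map
            (fun j => Multiset.replicate (height q (j + 1)) (x (j + 1)))).sum
          = ((List.range (q.headD 0)).map
              (fun j => Multiset.replicate (height q (j + 1)) (yval r (j + 1)))).sum)) := by
  set m := q.headD 0
  have hqm : ∀ p ∈ q, p ≤ m := fun p hp => List.le_headD_of_pairwise_ge hq.1 hp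
  have hx : ∀ p ∈ q, Set.InjOn x (Icc 1 p) := fun p hp i hi j hj => by
    simp only [coe_Icc, Set.mem_Icc] at hi hj
    exact hinj i j hi.1 (hi.2.trans (hqm p hp)) hj.1 (hj.2.trans (hqm p hp))
  have hxr : ∀ p ∈ q, ∀ j ∈ Icc 1 p, ∃ t : ℤ, x j - r = t := fun p hp j hj =>
    hint j (mem_Icc.1 hj).1 ((mem_Icc.1 hj).2.trans (hqm p hp))
  have hr : |r| ≤ 1 / 2 := abs_le.2 ⟨hr1.le, hr2⟩
  have hrows : ∀ a : ℕ → ℝ, ∑ j ∈ Icc 1 m, (height q j : ℝ) * a j ^ 2 =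
      (q.map fun p => ∑ j ∈ Icc 1 p, a j ^ 2).sum := fun a => by
    simp_rw [← nsmul_eq_mul, sum_height_smul hqm]
  have hle := fun p hp => sum_yval_sq_le hr (hx p hp) (hxr p hp)
  refine ⟨by rw [hrows, hrows]; exact List.sum_le_sum hle, fun hr0 hrh => ?_⟩
  have hIcc : ∀ a : ℕ → ℝ,
      ((List.range m).map fun j => Multiset.replicate (height q (j + 1)) (a (j + 1))).sum =
        ∑ j ∈ Icc 1 m, Multiset.replicate (height q j) (a j) := fun a =>
    List.sum_map_range_succ m fun j => Multiset.replicate (height q j) (a j)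
  rw [hIcc, hIcc]
  constructor
  · intro h
    rw [hrows, hrows, eq_comm, List.sum_map_eq_sum_map_iff_of_le hle] at h
    rw [sum_replicate_height hqm, sum_replicate_height hqm]
    exact congrArg List.sum (List.map_congr_left fun p hp => map_eq_map_yval_of_sum_sq_eq hr
      (two_mul_ne_intCast hr1 hr2 hr0 hrh) (hx p hp) (hxr p hp) (h p hp).symm)
  · intro h
    have hsq := congrArg (fun M => (M.map (· ^ 2)).sum) h
    rw [Multiset.sum_map_sum_replicate, Multiset.sum_map_sum_replicate] at hsq
    simpa only [nsmul_eq_mul] using hsq
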